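/- Let G be a bipartite graph with |L(G)| = m and suppose G contains an induced matching covering all m vertices of L(G) (an induced matching of size m using all of L(G)). Then every subset of L(G) is the intersection with L(G) of some maximal stable set of G, and consequently the average of |A ∩ L(G)| over all maximal stable sets A of G equals m/2. -/

import Mathlib

/-!
Fix an induced matching `v ↦ M v` from `L` into `R`. For `T ⊆ L`, the set `T ∪ M (L \ T)` is
stable because the matching is induced, and any maximal stable set `S` extending it meets `L`
exactly in `T`: a vertex `v ∈ L \ T` is excluded by its partner `M v ∈ S`. Conversely, a maximal
stable set is determined by its trace on `L`, since its vertices in `R` are exactly those with no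
neighbour in that trace. So `A ↦ A ∩ L` is a bijection from maximal stable sets onto the subsets
of `L`, and the average of `|A ∩ L|` is the average size of a subset of an `m`-set, `m / 2`.
-/

open Finset
open scoped Classical

variable {V : Type*}

/-- `S` is a maximal stable (independent) set of `G`: no two vertices of `S` are adjacent and
every vertex outside `S` has a neighbour in `S`. -/
def IsMaxStable [Fintype V] [DecidableEq V] (G : SimpleGraph V) (S : Finset V) : Prop :=
  (∀ u ∈ S, ∀ v ∈ S, ¬ G.Adj u v) ∧ ∀ v, v ∉ S → ∃ u ∈ S, G.Adj v u

/-- The collection 𝒜(G) of maximal stable sets of `G`. -/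
noncomputable def mstab [Fintype V] [DecidableEq V] (G : SimpleGraph V) : Finset (Finset V) :=
  Finset.univ.filter (fun S => IsMaxStable G S)

/-- `(L, R)` is a bipartition of `G`. -/
def IsBip [DecidableEq V] (G : SimpleGraph V) (L R : Finset V) : Prop :=
  Disjoint L R ∧ (∀ x : V, x ∈ L ∪ R) ∧
    ∀ ⦃u v⦄, G.Adj u v → (u ∈ L ∧ v ∈ R) ∨ (u ∈ R ∧ v ∈ L)

theorem Finset.two_mul_sum_card_powerset {α : Type*} [DecidableEq α] (s : Finset α) :
    2 * ∑ t ∈ s.powerset, #t = #s * 2 ^ #s := by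
  have hcompl : ∑ t ∈ s.powerset, #t = ∑ t ∈ s.powerset, #(s \ t) :=
    sum_nbij' (s \ ·) (s \ ·) (fun _ _ => mem_powerset.2 sdiff_subset)
      (fun _ _ => mem_powerset.2 sdiff_subset)
      (fun _ ht => sdiff_sdiff_eq_self (mem_powerset.1 ht))
      (fun _ ht => sdiff_sdiff_eq_self (mem_powerset.1 ht))
      (fun _ ht => by rw [sdiff_sdiff_eq_self (mem_powerset.1 ht)])
  calc 2 * ∑ t ∈ s.powerset, #t
      = ∑ t ∈ s.powerset, (#(s \ t) + #t) := by rw [sum_add_distrib, ← hcompl, two_mul]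
    _ = ∑ _t ∈ s.powerset, #s :=
        sum_congr rfl fun _ ht => card_sdiff_add_card_eq_card (mem_powerset.1 ht)
    _ = #s * 2 ^ #s := by rw [sum_const, card_powerset, smul_eq_mul, mul_comm]

theorem Finset.sum_card_powerset_div_card {α : Type*} [DecidableEq α] (s : Finset α) :
    (∑ t ∈ s.powerset, (#t : ℝ)) / #s.powerset = #s / 2 := by
  have h : (2 : ℝ) * ∑ t ∈ s.powerset, (#t : ℝ) = #s * 2 ^ #s := by
    exact_mod_cast s.two_mul_sum_card_powerset
  rw [card_powerset, div_eq_div_iff (by positivity) two_ne_zero]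
  push_cast
  linarith

namespace IsBip

variable [DecidableEq V] {G : SimpleGraph V} {L R : Finset V} {u v : V}

theorem not_adj_of_mem_left (h : IsBip G L R) (hu : u ∈ L) (hv : v ∈ L) : ¬G.Adj u v :=
  fun huv => (h.2.2 huv).elim (fun hl => disjoint_left.1 h.1 hv hl.2)
    (fun hr => disjoint_left.1 h.1 hu hr.1)

theorem not_adj_of_mem_right (h : IsBip G L R) (hu : u ∈ R) (hv : v ∈ R) : ¬G.Adj u v :=
  fun huv => (h.2.2 huv).elim (fun hl => disjoint_left.1 h.1 hl.1 hu)
    (fun hr => disjoint_left.1 h.1 hr.2 hv)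

theorem mem_left_of_adj (h : IsBip G L R) (hu : u ∉ L) (huv : G.Adj u v) : v ∈ L :=
  (h.2.2 huv).elim (fun hl => absurd hl.1 hu) (fun hr => hr.2)

theorem stable_union_image_of_isInducedMatching {M : V → V} (h : IsBip G L R)
    (hMR : ∀ v ∈ L, M v ∈ R) (hinduced : ∀ u ∈ L, ∀ v ∈ L, G.Adj u (M v) → u = v)
    {T : Finset V} (hT : T ⊆ L) :
    ∀ u ∈ T ∪ (L \ T).image M, ∀ v ∈ T ∪ (L \ T).image M, ¬G.Adj u v := by
  have hcross : ∀ u ∈ T, ∀ w ∈ L \ T, ¬G.Adj u (M w) := fun u hu w hw huw =>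
    (mem_sdiff.1 hw).2 (hinduced u (hT hu) w (mem_sdiff.1 hw).1 huw ▸ hu)
  simp only [mem_union, mem_image]
  rintro u (hu | ⟨w, hw, rfl⟩) v (hv | ⟨w', hw', rfl⟩)
  · exact h.not_adj_of_mem_left (hT hu) (hT hv)
  · exact hcross u hu w' hw'
  · exact fun hvw => hcross v hv w hw hvw.symm
  · exact h.not_adj_of_mem_right (hMR w (mem_sdiff.1 hw).1) (hMR w' (mem_sdiff.1 hw').1)

end IsBip

section MaxStable

variable [Fintype V] [DecidableEq V] {G : SimpleGraph V}

theorem mem_mstab {S : Finset V} : S ∈ mstab G ↔ IsMaxStable G S := by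
  simp [mstab]

theorem exists_isMaxStable_superset {S₀ : Finset V} (hS₀ : ∀ u ∈ S₀, ∀ v ∈ S₀, ¬G.Adj u v) :
    ∃ S, S₀ ⊆ S ∧ IsMaxStable G S := by
  obtain ⟨S, hS₀S, hS, hmax⟩ := Finite.exists_le_maximal (p := fun S : Finset V =>
    ∀ u ∈ S, ∀ v ∈ S, ¬G.Adj u v) hS₀
  refine ⟨S, hS₀S, hS, fun v hv => ?_⟩
  by_contra! hfree
  have hins : ∀ u ∈ insert v S, ∀ w ∈ insert v S, ¬G.Adj u w := by
    simp only [mem_insert]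
    rintro u (rfl | hu) w (rfl | hw)
    · exact G.irrefl
    · exact hfree w hw
    · exact fun huw => hfree u hu huw.symm
    · exact hS u hu w hw
  exact hv (hmax hins (subset_insert v S) (mem_insert_self v S))

variable {L R A B : Finset V}

/-- A vertex outside `L` lies in a maximal stable set iff it has no neighbour in its trace on `L`. -/
theorem IsMaxStable.subset_of_inter_eq (hbip : IsBip G L R) (hA : IsMaxStable G A)
    (hB : IsMaxStable G B) (hAB : A ∩ L = B ∩ L) : A ⊆ B := by
  intro x hxA
  by_cases hxL : x ∈ L
  · exact (mem_inter.1 (hAB ▸ mem_inter.2 ⟨hxA, hxL⟩)).1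
  · by_contra hxB
    obtain ⟨u, huB, hxu⟩ := hB.2 x hxB
    have huA : u ∈ A := (mem_inter.1 (hAB ▸ mem_inter.2 ⟨huB, hbip.mem_left_of_adj hxL hxu⟩)).1
    exact hA.1 x hxA u huA hxu

theorem IsMaxStable.eq_of_inter_eq (hbip : IsBip G L R) (hA : IsMaxStable G A)
    (hB : IsMaxStable G B) (hAB : A ∩ L = B ∩ L) : A = B :=
  (hA.subset_of_inter_eq hbip hB hAB).antisymm (hB.subset_of_inter_eq hbip hA hAB.symm)

variable {M : V → V}

theorem exists_isMaxStable_inter_eq (hbip : IsBip G L R) (hMR : ∀ v ∈ L, M v ∈ R)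
    (hMadj : ∀ v ∈ L, G.Adj v (M v)) (hinduced : ∀ u ∈ L, ∀ v ∈ L, G.Adj u (M v) → u = v)
    {T : Finset V} (hT : T ⊆ L) : ∃ S, IsMaxStable G S ∧ S ∩ L = T := by
  obtain ⟨S, hsub, hS⟩ := exists_isMaxStable_superset
    (hbip.stable_union_image_of_isInducedMatching hMR hinduced hT)
  refine ⟨S, hS, Subset.antisymm (fun x hx => ?_) fun x hx => mem_inter.2 ⟨hsub
    (mem_union_left _ hx), hT hx⟩⟩
  obtain ⟨hxS, hxL⟩ := mem_inter.1 hx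
  by_contra hxT
  have hMx : M x ∈ S := hsub (mem_union_right _ (mem_image_of_mem M (mem_sdiff.2 ⟨hxL, hxT⟩)))
  exact hS.1 x hxS (M x) hMx (hMadj x hxL)

end MaxStable

theorem stmt_12_general [Fintype V] [DecidableEq V] (G : SimpleGraph V) (L R : Finset V)
    (hbip : IsBip G L R) (m : ℕ) (hm : L.card = m) (M : V → V)
    (hMR : ∀ v ∈ L, M v ∈ R)
    (hMadj : ∀ v ∈ L, G.Adj v (M v))
    (hinduced : ∀ u ∈ L, ∀ v ∈ L, G.Adj u (M v) → u = v) :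
    (∀ T ⊆ L, ∃ S ∈ mstab G, S ∩ L = T) ∧
      (∑ A ∈ mstab G, ((A ∩ L).card : ℝ)) / ((mstab G).card : ℝ) = m / 2 := by
  have htrace : ∀ T ⊆ L, ∃ S ∈ mstab G, S ∩ L = T := fun T hT =>
    (exists_isMaxStable_inter_eq hbip hMR hMadj hinduced hT).imp
      fun S hS => ⟨mem_mstab.2 hS.1, hS.2⟩
  have hbij : Set.BijOn (· ∩ L) ↑(mstab G) ↑L.powerset :=
    ⟨fun _ _ => mem_powerset.2 inter_subset_right,
      fun _ hA _ hB hAB => (mem_mstab.1 hA).eq_of_inter_eq hbip (mem_mstab.1 hB) hAB,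
      fun T hT => htrace T (mem_powerset.1 hT)⟩
  refine ⟨htrace, ?_⟩
  rw [sum_nbij (· ∩ L) (fun _ hA => hbij.mapsTo hA) hbij.injOn hbij.surjOn
      (g := fun T => (#T : ℝ)) (fun _ _ => rfl), hbij.finsetCard_eq, L.sum_card_powerset_div_card,
    hm]

theorem stmt_12 [Fintype V] [DecidableEq V] (G : SimpleGraph V) (L R : Finset V)
    (hbip : IsBip G L R) (m : ℕ) (hm : L.card = m) (M : V → V)
    (hMR : ∀ v ∈ L, M v ∈ R) (hMinj : Set.InjOn M ↑L)
    (hMadj : ∀ v ∈ L, G.Adj v (M v))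
    (hinduced : ∀ u ∈ L, ∀ v ∈ L, G.Adj u (M v) → u = v) :
    (∀ T ⊆ L, ∃ S ∈ mstab G, S ∩ L = T) ∧
      (∑ A ∈ mstab G, ((A ∩ L).card : ℝ)) / ((mstab G).card : ℝ) = m / 2 :=
  stmt_12_general G L R hbip m hm M hMR hMadj hinduced
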